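/- Let u_ε be the solutions of −ε²Δu + V(x)u = K(x)f(u) produced by the main theorem (with all its hypotheses). If N ≥ 5, or if liminf_{|x|→∞} |x|²V(x) > 0, then for ε small enough u_ε ∈ L²(ℝ^N). -/

import Mathlib

open MeasureTheory Filter Topology Metric Set Bornology
open scoped RealInnerProductSpace ENNReal Classical

noncomputable section

abbrev Euc (N : ℕ) := EuclideanSpace ℝ (Fin N)

noncomputable def lap {N : ℕ} (ψ : Euc N → ℝ) (x : Euc N) : ℝ :=
  ∑ i : Fin N, fderiv ℝ (fun y => fderiv ℝ ψ y (EuclideanSpace.single i 1)) x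
      (EuclideanSpace.single i 1)

def MemD12 {N : ℕ} (u : Euc N → ℝ) : Prop :=
  Differentiable ℝ u ∧ Integrable (fun x => ‖gradient u x‖ ^ 2) ∧
  ∃ φ : ℕ → Euc N → ℝ,
    (∀ n, ContDiff ℝ (⊤ : ℕ∞) (φ n)) ∧ (∀ n, HasCompactSupport (φ n)) ∧
    Tendsto (fun n => ∫ x, ‖gradient (φ n) x - gradient u x‖ ^ 2) atTop (𝓝 0) ∧
    ∀ᵐ x : Euc N ∂volume, Tendsto (fun n => φ n x) atTop (𝓝 (u x))

noncomputable def projH {N : ℕ} (S : Submodule ℝ (Euc N)) (x : Euc N) : Euc N :=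
  (Submodule.orthogonalProjectionOnto S x : Euc N)

noncomputable def perpH {N : ℕ} (S : Submodule ℝ (Euc N)) (x : Euc N) : Euc N :=
  x - projH S x

noncomputable def dH {N : ℕ} (S : Submodule ℝ (Euc N)) (x y : Euc N) : ℝ :=
  Real.sqrt (‖projH S x - projH S y‖ ^ 2 + (‖perpH S x‖ - ‖perpH S y‖) ^ 2)

def BH {N : ℕ} (S : Submodule ℝ (Euc N)) (x : Euc N) (r : ℝ) : Set (Euc N) :=
  {y | dH S x y < r}

def FixesH {N : ℕ} (S : Submodule ℝ (Euc N)) (R : Euc N ≃ₗᵢ[ℝ] Euc N) : Prop :=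
  ∀ x, x ∈ S ↔ R x ∈ S

noncomputable def Fint (f : ℝ → ℝ) (s : ℝ) : ℝ := ∫ t in (0:ℝ)..s, f t

noncomputable def groundEnergy (m : ℕ) (f : ℝ → ℝ) (a b : ℝ) : ℝ :=
  sInf {c : ℝ | ∃ u : Euc m → ℝ, u ≠ 0 ∧ Differentiable ℝ u ∧
    Integrable (fun x => ‖gradient u x‖ ^ 2) ∧ Integrable (fun x => (u x) ^ 2) ∧
    (∫ x, (‖gradient u x‖ ^ 2 + a * (u x) ^ 2)) = b * ∫ x, f (u x) * u x ∧
    c = (1 / 2) * (∫ x, (‖gradient u x‖ ^ 2 + a * (u x) ^ 2)) - b * ∫ x, Fint f (u x)}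

noncomputable def Mpot {N : ℕ} (k : ℕ) (S : Submodule ℝ (Euc N)) (f : ℝ → ℝ)
    (V K : Euc N → ℝ) (x : Euc N) : EReal :=
  if 0 < K x then ((‖perpH S x‖ ^ k * groundEnergy (N - k) f (V x) (K x) : ℝ) : EReal)
  else ⊤

noncomputable def sphereVol (k : ℕ) : ℝ :=
  (k + 1) * (volume (ball (0 : Euc (k + 1)) 1)).toReal

noncomputable def Hpen {N : ℕ} (κ β : ℝ) (x : Euc N) : ℝ :=
  κ / (‖x‖ ^ 2 * ((Real.log ‖x‖) ^ 2 + 1) ^ ((1 + β) / 2))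

noncomputable def Gof {N : ℕ} (g : Euc N → ℝ → ℝ) (x : Euc N) (s : ℝ) : ℝ :=
  ∫ t in (0:ℝ)..s, g x t

noncomputable def Jfun {N : ℕ} (V : Euc N → ℝ) (g : Euc N → ℝ → ℝ) (ε : ℝ)
    (w : Euc N → ℝ) : ℝ :=
  (1 / 2) * (∫ x, (ε ^ 2 * ‖gradient w x‖ ^ 2 + V x * (w x) ^ 2)) - ∫ x, Gof g x (w x)

noncomputable def Jpair {N : ℕ} (V : Euc N → ℝ) (g : Euc N → ℝ → ℝ) (ε : ℝ)
    (w v : Euc N → ℝ) : ℝ :=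
  ∫ x, (ε ^ 2 * ⟪gradient w x, gradient v x⟫ + V x * w x * v x - g x (w x) * v x)

def MemH1V {N : ℕ} (V : Euc N → ℝ) (u : Euc N → ℝ) : Prop :=
  MemD12 u ∧ Integrable (fun x => V x * (u x) ^ 2)

def MemH1VH {N : ℕ} (V : Euc N → ℝ) (S : Submodule ℝ (Euc N)) (u : Euc N → ℝ) : Prop :=
  MemH1V V u ∧ ∀ R : Euc N ≃ₗᵢ[ℝ] Euc N, FixesH S R → ∀ x, u (R x) = u x

noncomputable def normEpsSq {N : ℕ} (ε : ℝ) (V : Euc N → ℝ) (u : Euc N → ℝ) : ℝ :=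
  ∫ x, (ε ^ 2 * ‖gradient u x‖ ^ 2 + V x * (u x) ^ 2)

noncomputable def cval {N : ℕ} (S : Submodule ℝ (Euc N)) (V : Euc N → ℝ)
    (g : Euc N → ℝ → ℝ) (ε : ℝ) : ℝ :=
  sInf {c : ℝ | ∃ w, MemH1VH V S w ∧ w ≠ 0 ∧
    c = sSup ((fun t : ℝ => Jfun V g ε (t • w)) '' Ioi 0)}

noncomputable def gpen {N : ℕ} (Λ : Set (Euc N)) (K V : Euc N → ℝ) (f : ℝ → ℝ)
    (κ β μ ε : ℝ) (x : Euc N) (s : ℝ) : ℝ :=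
  if x ∈ Λ then K x * f s
  else min ((ε ^ 2 * Hpen κ β x + μ * V x) * s) (K x * f s)

def IsLES {N : ℕ} (S : Submodule ℝ (Euc N)) (Λ : Set (Euc N)) (K V : Euc N → ℝ)
    (f : ℝ → ℝ) (κ β μ ε : ℝ) (w : Euc N → ℝ) : Prop :=
  MemH1VH V S w ∧ (∀ x, 0 < w x) ∧
  (∀ v, MemH1VH V S v → Jpair V (gpen Λ K V f κ β μ ε) ε w v = 0) ∧
  Jfun V (gpen Λ K V f κ β μ ε) ε w = cval S V (gpen Λ K V f κ β μ ε) ε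

lemma aux_memL2 {N : ℕ} (f : Euc N → ℝ) (hf : Continuous f) (C r : ℝ)
    (hr : (N : ℝ) < 2 * r) (hb : ∀ x, |f x| ≤ C * (1 + ‖x‖) ^ (-r)) :
    MemLp f 2 (volume : Measure (Euc N)) := by
  rw [memLp_two_iff_integrable_sq hf.aestronglyMeasurable]
  have hint : Integrable (fun x : Euc N => (1 + ‖x‖) ^ (-(2 * r))) volume := by
    apply integrable_one_add_norm
    simpa using hr
  refine ((hint.const_mul (C ^ 2)).mono ((hf.pow 2).aestronglyMeasurable)
    (ae_of_all _ fun x => ?_))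
  have h1 : (0:ℝ) ≤ 1 + ‖x‖ := by positivity
  have h3 : |f x| ^ 2 ≤ (C * (1 + ‖x‖) ^ (-r)) ^ 2 :=
    pow_le_pow_left₀ (abs_nonneg _) (hb x) 2
  calc ‖f x ^ 2‖ = |f x| ^ 2 := by rw [Real.norm_eq_abs, abs_pow, sq_abs, ← sq_abs]
    _ ≤ (C * (1 + ‖x‖) ^ (-r)) ^ 2 := h3
    _ = C ^ 2 * (1 + ‖x‖) ^ (-(2 * r)) := by
        rw [mul_pow, ← Real.rpow_natCast ((1 + ‖x‖) ^ (-r)) 2, ← Real.rpow_mul h1]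
        ring_nf
    _ ≤ ‖C ^ 2 * (1 + ‖x‖) ^ (-(2 * r))‖ := le_abs_self _

theorem stmt18
    (N k : ℕ) (hN : 3 ≤ N) (hk1 : 1 ≤ k) (hkN : k ≤ N - 1)
    (𝓗 : Submodule ℝ (Euc N)) (hdim : Module.finrank ℝ 𝓗 = N - k - 1)
    (V K : Euc N → ℝ)
    (hVcont : ContinuousOn V {0}ᶜ) (hKcont : ContinuousOn K {0}ᶜ)
    (hVnn : ∀ x, 0 ≤ V x) (hKnn : ∀ x, 0 ≤ K x)
    (hKne : ∃ x : Euc N, x ≠ 0 ∧ K x ≠ 0)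
    (hVinv : ∀ R : Euc N ≃ₗᵢ[ℝ] Euc N, FixesH 𝓗 R → ∀ x, V (R x) = V x)
    (hKinv : ∀ R : Euc N ≃ₗᵢ[ℝ] Euc N, FixesH 𝓗 R → ∀ x, K (R x) = K x)
    (f : ℝ → ℝ) (hfcont : ContinuousOn f (Ici 0)) (hfnn : ∀ s : ℝ, 0 ≤ s → 0 ≤ f s)
    (p q θ : ℝ) (hq : 1 < q) (hp : 1 < p)
    (hpcrit : 1 / 2 - 1 / ((N : ℝ) - k) < 1 / (p + 1))
    (hf1 : ∃ C > 0, ∃ δ > 0, ∀ s : ℝ, 0 < s → s ≤ δ → f s ≤ C * s ^ q)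
    (hf2 : ∃ C > 0, ∃ s₀ > 0, ∀ s : ℝ, s₀ ≤ s → f s ≤ C * s ^ p)
    (hθ : 2 < θ) (hθp : θ ≤ p + 1)
    (hf3 : ∀ s : ℝ, 0 < s → 0 < θ * Fint f s ∧ θ * Fint f s ≤ f s * s)
    (hf4 : ∀ s t : ℝ, 0 < s → s ≤ t → f s / s ≤ f t / t)
    (β κ μ : ℝ) (hβ : 0 < β) (hκ0 : 0 < κ) (hκ : κ < (((N : ℝ) - 2) / 2) ^ 2)
    (hμ : μ ∈ Ioo (0:ℝ) 1)
    (Λ : Set (Euc N)) (hΛopen : IsOpen Λ) (hΛbd : IsBounded Λ)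
    (hΛ0 : closure Λ ⊆ {0}ᶜ)
    (hΛH : closure Λ ∩ (𝓗 : Set (Euc N)) = ∅)
    (hΛHperp : (Λ ∩ ((𝓗ᗮ : Submodule ℝ (Euc N)) : Set (Euc N))).Nonempty)
    (hΛinv : ∀ R : Euc N ≃ₗᵢ[ℝ] Euc N, FixesH 𝓗 R → (fun x => R x) '' Λ = Λ)
    (hVΛ : ∀ x ∈ closure Λ, 0 < V x)
    (hM0 : (0 : EReal) < sInf (Mpot k 𝓗 f V K '' (Λ ∩ ((𝓗ᗮ : Submodule ℝ (Euc N)) : Set (Euc N)))))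
    (hMfr : sInf (Mpot k 𝓗 f V K '' (Λ ∩ ((𝓗ᗮ : Submodule ℝ (Euc N)) : Set (Euc N)))) <
      sInf (Mpot k 𝓗 f V K '' (frontier Λ ∩ ((𝓗ᗮ : Submodule ℝ (Euc N)) : Set (Euc N)))))
    (hMk : k = N - 2 → sInf (Mpot k 𝓗 f V K '' (Λ ∩ ((𝓗ᗮ : Submodule ℝ (Euc N)) : Set (Euc N)))) <
      ((2 : ℝ) : EReal) * sInf (Mpot k 𝓗 f V K '' Λ))
    (u : ℝ → Euc N → ℝ) (xpt : ℝ → Euc N)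
    (hxΛ : ∀ ε : ℝ, 0 < ε → xpt ε ∈ Λ ∩ ((𝓗ᗮ : Submodule ℝ (Euc N)) : Set (Euc N)))
    (hsol : ∀ ε : ℝ, 0 < ε → (∀ x, 0 < u ε x) ∧ ContDiff ℝ 1 (u ε) ∧
      (∀ x, u ε x ≤ u ε (xpt ε)) ∧
      (∀ φ : Euc N → ℝ, ContDiff ℝ (⊤ : ℕ∞) φ → HasCompactSupport φ →
        (∫ x, (ε ^ 2 * ⟪gradient (u ε) x, gradient φ x⟫ + V x * u ε x * φ x)) =
          ∫ x, K x * f (u ε x) * φ x))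
    (hdecay : ∃ C > 0, ∃ lam > 0, ∃ ε₁ > 0, ∀ ε ∈ Ioo (0:ℝ) ε₁, ∀ x : Euc N,
      u ε x ≤ C * Real.exp (-(lam / ε) *
        (Metric.infDist x {y : Euc N | y ∈ ((𝓗ᗮ : Submodule ℝ (Euc N)) : Set (Euc N)) ∧ ‖y‖ = ‖perpH 𝓗 (xpt ε)‖} /
          (1 + Metric.infDist x {y : Euc N | y ∈ ((𝓗ᗮ : Submodule ℝ (Euc N)) : Set (Euc N)) ∧ ‖y‖ = ‖perpH 𝓗 (xpt ε)‖}))) /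
        (1 + ‖x‖) ^ (N - 2))
    (himproved : (∃ c > 0, ∃ R₁ : ℝ, ∀ x : Euc N, R₁ ≤ ‖x‖ → c ≤ V x * ‖x‖ ^ 2) →
      ∃ C > 0, ∃ ν > 0, ∃ ε₂ > 0, ∀ ε ∈ Ioo (0:ℝ) ε₂, ∀ x : Euc N,
        u ε x ≤ C * (1 + ‖x‖) ^ (-(ν / ε)))
    (hcond : 5 ≤ N ∨ ∃ c > 0, ∃ R₁ : ℝ, ∀ x : Euc N, R₁ ≤ ‖x‖ → c ≤ V x * ‖x‖ ^ 2) :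
    ∃ ε₀ > 0, ∀ ε ∈ Ioo (0:ℝ) ε₀, MemLp (u ε) 2 (volume : Measure (Euc N)) := by
  rcases hcond with hN5 | hVinf
  · obtain ⟨C, hC, lam, hlam, ε₁, hε₁, hdec⟩ := hdecay
    refine ⟨ε₁, hε₁, fun ε hε => ?_⟩
    obtain ⟨hpos, hcd, -, -⟩ := hsol ε hε.1
    apply aux_memL2 (u ε) (hcd.continuous) C ((N - 2 : ℕ) : ℝ)
    · have h2 : (2 : ℕ) ≤ N := by omega
      push_cast [Nat.cast_sub h2]
      have : (5 : ℝ) ≤ N := by exact_mod_cast hN5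
      linarith
    · intro x
      have hb := hdec ε hε x
      have h1 : (0:ℝ) < 1 + ‖x‖ := by positivity
      set d := Metric.infDist x {y : Euc N | y ∈ ((𝓗ᗮ : Submodule ℝ (Euc N)) : Set (Euc N)) ∧ ‖y‖ = ‖perpH 𝓗 (xpt ε)‖} with hd
      have hd0 : 0 ≤ d := Metric.infDist_nonneg
      have hexp : Real.exp (-(lam / ε) * (d / (1 + d))) ≤ 1 := by
        apply Real.exp_le_one_iff.mpr
        have : 0 ≤ lam / ε := le_of_lt (div_pos hlam hε.1)
        have : 0 ≤ d / (1 + d) := div_nonneg hd0 (by linarith)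
        nlinarith
      have habs : |u ε x| = u ε x := abs_of_pos (hpos x)
      rw [habs]
      calc u ε x ≤ C * Real.exp (-(lam / ε) * (d / (1 + d))) / (1 + ‖x‖) ^ (N - 2) := hb
        _ ≤ C * 1 / (1 + ‖x‖) ^ (N - 2) := by
            apply div_le_div_of_nonneg_right _ (by positivity)
            exact mul_le_mul_of_nonneg_left hexp (le_of_lt hC)
        _ = C * (1 + ‖x‖) ^ (-((N - 2 : ℕ) : ℝ)) := by
            rw [Real.rpow_neg (le_of_lt h1), Real.rpow_natCast]
            field_simp
  · obtain ⟨C, hC, ν, hν, ε₂, hε₂, hdec⟩ := himproved hVinf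
    have hN0 : (0:ℝ) < N := by positivity
    refine ⟨min ε₂ (ν / N), lt_min hε₂ (div_pos hν hN0), fun ε hε => ?_⟩
    have hεe2 : ε < ε₂ := lt_of_lt_of_le hε.2 (min_le_left _ _)
    have hεν : ε < ν / N := lt_of_lt_of_le hε.2 (min_le_right _ _)
    obtain ⟨hpos, hcd, -, -⟩ := hsol ε hε.1
    apply aux_memL2 (u ε) (hcd.continuous) C (ν / ε)
    · have h1 : ε * N < ν := (lt_div_iff₀ hN0).mp hεν
      have h2 : (N:ℝ) < ν / ε := (lt_div_iff₀ hε.1).mpr (by nlinarith)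
      have h3 : 0 < ν / ε := div_pos hν hε.1
      linarith
    · intro x
      rw [abs_of_pos (hpos x)]
      exact hdec ε ⟨hε.1, hεe2⟩ x
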